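/- Suppose the eigenvalues λ₁ > ⋯ > λₙ of C = ∫ ∇g(γ)∇g(γ)ᵀ σ(γ) dγ are distinct, where γ = Wᵀ x for an orthogonal-column basis W of null(D) and g is the dimensionless physical relation. Then the matrix Z = W U (U the eigenvector matrix of C) is independent of the choice of orthogonal basis W: if W' = W Q for orthogonal Q, the construction applied to W' yields Z' = Z (up to scaling of individual columns by constants). -/

import Mathlib

/-! Replacing `W` by `W * Q` acts on `γ` through the linear isometry `γ' ↦ Q γ'`, which preserves
Lebesgue measure and pulls gradients back by `Qᵀ`; hence `C' = Qᵀ C Q`, and the columns of `Q U'`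
form a second orthonormal eigenbasis of `C`. Both eigenvalue lists are strictly decreasing
enumerations of the spectrum of `C`, so they coincide, and since every eigenspace is a line,
the `i`-th column of `Q U'` is a nonzero multiple of the `i`-th column of `U`. -/

open Matrix MeasureTheory

section OrthogonalIsometry

variable {ι : Type*} [Fintype ι] [DecidableEq ι]

noncomputable def Matrix.orthogonalIsometry (Q : Matrix ι ι ℝ) (hQ : Qᵀ * Q = 1) :
    EuclideanSpace ℝ ι ≃ₗᵢ[ℝ] EuclideanSpace ℝ ι :=
  LinearEquiv.isometryOfInner
    { toLinearMap := toLpLin 2 2 Q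
      invFun := toLpLin 2 2 Qᵀ
      left_inv := fun x => by simp [toLpLin_apply, mulVec_mulVec, hQ]
      right_inv := fun x => by simp [toLpLin_apply, mulVec_mulVec, mul_eq_one_comm.mp hQ] }
    fun x y => by
      simp [toLpLin_apply, EuclideanSpace.inner_eq_star_dotProduct, dotProduct_mulVec,
        vecMul_mulVec, hQ]

@[simp]
theorem Matrix.orthogonalIsometry_apply (Q : Matrix ι ι ℝ) (hQ : Qᵀ * Q = 1)
    (x : EuclideanSpace ℝ ι) : Q.orthogonalIsometry hQ x = WithLp.toLp 2 (Q *ᵥ x.ofLp) := rfl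

@[simp]
theorem Matrix.orthogonalIsometry_symm_apply (Q : Matrix ι ι ℝ) (hQ : Qᵀ * Q = 1)
    (x : EuclideanSpace ℝ ι) :
    (Q.orthogonalIsometry hQ).symm x = WithLp.toLp 2 (Qᵀ *ᵥ x.ofLp) :=
  rfl

end OrthogonalIsometry

theorem HasGradientAt.comp_linearIsometryEquiv {F F' : Type*} [NormedAddCommGroup F]
    [InnerProductSpace ℝ F] [CompleteSpace F] [NormedAddCommGroup F'] [InnerProductSpace ℝ F']
    [CompleteSpace F'] (e : F ≃ₗᵢ[ℝ] F') {g : F' → ℝ} {G : F'} {x : F}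
    (h : HasGradientAt g G (e x)) : HasGradientAt (g ∘ e) (e.symm G) x := by
  rw [hasGradientAt_iff_hasFDerivAt] at h ⊢
  refine (h.comp x e.toContinuousLinearEquiv.hasFDerivAt).congr_fderiv ?_
  ext v
  simp [← e.inner_map_map (e.symm G) v]

section SecondMoment

variable {α β ι κ : Type*} [MeasurableSpace α] [MeasurableSpace β]

noncomputable def weightedSecondMoment (μ : Measure α) (f : α → ι → ℝ) (w : α → ℝ) :
    Matrix ι ι ℝ :=
  of fun i j => ∫ x, f x i * f x j * w x ∂μ

theorem weightedSecondMoment_comp {μ : Measure α} {ν : Measure β} {T : α → β}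
    (hT : MeasurePreserving T μ ν) (hTe : MeasurableEmbedding T) (f : β → ι → ℝ) (w : β → ℝ) :
    weightedSecondMoment μ (f ∘ T) (w ∘ T) = weightedSecondMoment ν f w := by
  ext i j
  exact hT.integral_comp hTe fun y => f y i * f y j * w y

theorem weightedSecondMoment_mulVec [Fintype ι] {μ : Measure α} {f : α → ι → ℝ} {w : α → ℝ}
    (hf : ∀ a b, Integrable (fun x => f x a * f x b * w x) μ) (A : Matrix κ ι ℝ) :
    weightedSecondMoment μ (fun x => A *ᵥ f x) w = A * weightedSecondMoment μ f w * Aᵀ := by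
  ext i j
  have hexpand : ∀ x, (A *ᵥ f x) i * (A *ᵥ f x) j * w x
      = ∑ a, ∑ b, A i a * A j b * (f x a * f x b * w x) := fun x => by
    simp only [mulVec, dotProduct]
    rw [Finset.sum_mul_sum, Finset.sum_mul]
    refine Finset.sum_congr rfl fun a _ => ?_
    rw [Finset.sum_mul]
    exact Finset.sum_congr rfl fun b _ => by ring
  simp only [weightedSecondMoment, of_apply, hexpand, mul_apply, transpose_apply, Finset.sum_mul]
  rw [integral_finsetSum _ fun a _ => integrable_finsetSum _ fun b _ => (hf a b).const_mul _,
    Finset.sum_comm]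
  refine Finset.sum_congr rfl fun a _ => ?_
  rw [integral_finsetSum _ fun b _ => (hf a b).const_mul _]
  refine Finset.sum_congr rfl fun b _ => ?_
  rw [integral_const_mul]
  ring

end SecondMoment

theorem Matrix.col_mul {l m n R : Type*} [Fintype m] [NonUnitalNonAssocSemiring R]
    (A : Matrix l m R) (B : Matrix m n R) (j : n) : (A * B).col j = A *ᵥ B.col j :=
  rfl

section OrthogonalEigenbasis

variable {ι : Type*} [Fintype ι] [DecidableEq ι] {C V : Matrix ι ι ℝ} {lam : ι → ℝ}

theorem Matrix.col_ne_zero_of_transpose_mul_self (hV : Vᵀ * V = 1) (i : ι) : V.col i ≠ 0 := by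
  intro h
  have hii := congrFun (congrFun hV i) i
  simp [mul_apply, show ∀ j, V j i = 0 from congrFun h] at hii

theorem Matrix.transpose_mul_eq_diagonal_mul (hV : Vᵀ * V = 1)
    (heig : ∀ i, C *ᵥ V.col i = lam i • V.col i) : Vᵀ * C = diagonal lam * Vᵀ := by
  have hCV : C * V = V * diagonal lam := by
    ext j i
    have h := congrFun (heig i) j
    rw [← col_mul] at h
    simpa [mul_comm] using h
  calc Vᵀ * C = Vᵀ * (C * V) * Vᵀ := by
        rw [mul_assoc Vᵀ, mul_assoc, mul_eq_one_comm.mp hV, mul_one]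
    _ = diagonal lam * Vᵀ := by rw [hCV, ← mul_assoc, hV, one_mul]

theorem Matrix.mul_transpose_mulVec_apply_of_mulVec_eq_smul (hV : Vᵀ * V = 1)
    (heig : ∀ i, C *ᵥ V.col i = lam i • V.col i) {v : ι → ℝ} {μ : ℝ} (hCv : C *ᵥ v = μ • v)
    (j : ι) : lam j * (Vᵀ *ᵥ v) j = μ * (Vᵀ *ᵥ v) j := by
  have h : Vᵀ *ᵥ (C *ᵥ v) = Vᵀ *ᵥ (μ • v) := by rw [hCv]
  rw [mulVec_mulVec, transpose_mul_eq_diagonal_mul hV heig, ← mulVec_mulVec, mulVec_smul] at h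
  simpa [mulVec_diagonal] using congrFun h j

theorem Matrix.mem_range_of_mulVec_eq_smul (hV : Vᵀ * V = 1)
    (heig : ∀ i, C *ᵥ V.col i = lam i • V.col i) {v : ι → ℝ} {μ : ℝ} (hv : v ≠ 0)
    (hCv : C *ᵥ v = μ • v) : μ ∈ Set.range lam := by
  have hcoord : Vᵀ *ᵥ v ≠ 0 := fun h => hv <| by
    rw [← one_mulVec v, ← mul_eq_one_comm.mp hV, ← mulVec_mulVec, h, mulVec_zero]
  obtain ⟨j, hj⟩ := Function.ne_iff.mp hcoord
  exact ⟨j, mul_right_cancel₀ hj (mul_transpose_mulVec_apply_of_mulVec_eq_smul hV heig hCv j)⟩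

theorem Matrix.eq_smul_col_of_mulVec_eq_smul (hV : Vᵀ * V = 1) (hlam : Function.Injective lam)
    (heig : ∀ i, C *ᵥ V.col i = lam i • V.col i) {v : ι → ℝ} {i : ι}
    (hCv : C *ᵥ v = lam i • v) : v = (Vᵀ *ᵥ v) i • V.col i := by
  set c := (Vᵀ *ᵥ v) i
  have hcoord : Vᵀ *ᵥ v = Pi.single i c := by
    ext j
    rcases eq_or_ne j i with rfl | hji
    · simp [c]
    · have h := mul_transpose_mulVec_apply_of_mulVec_eq_smul hV heig hCv j
      rw [Pi.single_eq_of_ne hji]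
      exact (mul_eq_mul_right_iff.mp h).resolve_left (hlam.ne hji)
  calc v = V *ᵥ (Vᵀ *ᵥ v) := by rw [mulVec_mulVec, mul_eq_one_comm.mp hV, one_mulVec]
    _ = c • V.col i := by rw [hcoord, mulVec_single, op_smul_eq_smul]

theorem Matrix.exists_col_eq_smul_col_of_eigenbases [LinearOrder ι] {V' : Matrix ι ι ℝ}
    {lam' : ι → ℝ} (hV : Vᵀ * V = 1) (hV' : V'ᵀ * V' = 1) (hlam : StrictAnti lam)
    (hlam' : StrictAnti lam') (heig : ∀ i, C *ᵥ V.col i = lam i • V.col i)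
    (heig' : ∀ i, C *ᵥ V'.col i = lam' i • V'.col i) (i : ι) :
    ∃ c : ℝ, c ≠ 0 ∧ V'.col i = c • V.col i := by
  have hrange : Set.range lam = Set.range lam' := by
    apply Set.Subset.antisymm <;> rintro _ ⟨j, rfl⟩
    · exact mem_range_of_mulVec_eq_smul hV' heig' (col_ne_zero_of_transpose_mul_self hV j) (heig j)
    · exact mem_range_of_mulVec_eq_smul hV heig (col_ne_zero_of_transpose_mul_self hV' j) (heig' j)
  have hcol := eq_smul_col_of_mulVec_eq_smul hV hlam.injective heig
    (((hlam.range_inj hlam').mp hrange) ▸ heig' i)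
  refine ⟨_, fun hc => col_ne_zero_of_transpose_mul_self hV' i ?_, hcol⟩
  rw [hcol, hc, zero_smul]

end OrthogonalEigenbasis

theorem stmt15_general (m n : ℕ)
    (W : Matrix (Fin m) (Fin n) ℝ)
    (Q : Matrix (Fin n) (Fin n) ℝ) (hQ : Qᵀ * Q = 1)
    (g : EuclideanSpace ℝ (Fin n) → ℝ)
    (Gg : EuclideanSpace ℝ (Fin n) → EuclideanSpace ℝ (Fin n))
    (hGg : ∀ γ, HasGradientAt g (Gg γ) γ)
    (σ : EuclideanSpace ℝ (Fin n) → ℝ)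
    (C : Matrix (Fin n) (Fin n) ℝ)
    (hC : ∀ i j, C i j = ∫ γ, Gg γ i * Gg γ j * σ γ)
    (hIntC : ∀ i j, Integrable (fun γ => Gg γ i * Gg γ j * σ γ))
    (U : Matrix (Fin n) (Fin n) ℝ) (hU : Uᵀ * U = 1)
    (lam : Fin n → ℝ) (hlam : StrictAnti lam)
    (heig : ∀ i : Fin n, C *ᵥ (fun j => U j i) = lam i • (fun j => U j i))
    (g' : EuclideanSpace ℝ (Fin n) → ℝ)
    (hg' : ∀ γ' : EuclideanSpace ℝ (Fin n), g' γ' = g (WithLp.toLp 2 (Q *ᵥ γ' : Fin n → ℝ)))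
    (Gg' : EuclideanSpace ℝ (Fin n) → EuclideanSpace ℝ (Fin n))
    (hGg' : ∀ γ', HasGradientAt g' (Gg' γ') γ')
    (C' : Matrix (Fin n) (Fin n) ℝ)
    (hC' : ∀ i j, C' i j = ∫ γ' : EuclideanSpace ℝ (Fin n),
      Gg' γ' i * Gg' γ' j * σ (WithLp.toLp 2 (Q *ᵥ γ' : Fin n → ℝ)))
    (U' : Matrix (Fin n) (Fin n) ℝ) (hU' : U'ᵀ * U' = 1)
    (lam' : Fin n → ℝ) (hlam' : StrictAnti lam')
    (heig' : ∀ i : Fin n, C' *ᵥ (fun j => U' j i) = lam' i • (fun j => U' j i)) :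
    ∀ i : Fin n, ∃ c : ℝ, c ≠ 0 ∧
      (fun j => (W * Q * U') j i : Fin m → ℝ) = c • (fun j => (W * U) j i) := by
  set e := Q.orthogonalIsometry hQ
  have hgrad : ∀ γ', Gg' γ' = e.symm (Gg (e γ')) := fun γ' =>
    (hGg' γ').unique <| by
      rw [show g' = g ∘ e from funext hg']
      exact (hGg (e γ')).comp_linearIsometryEquiv e
  have hC₀ : weightedSecondMoment volume (fun γ => (Gg γ).ofLp) σ = C :=
    ext fun i j => (hC i j).symm
  have hCQ : C' = Qᵀ * C * Q := calc
    C' = weightedSecondMoment volume ((fun γ => Qᵀ *ᵥ (Gg γ).ofLp) ∘ e) (σ ∘ e) := by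
      ext i j
      simp [weightedSecondMoment, hC', hgrad, e]
    _ = weightedSecondMoment volume (fun γ => Qᵀ *ᵥ (Gg γ).ofLp) σ :=
      weightedSecondMoment_comp e.measurePreserving e.toHomeomorph.measurableEmbedding _ _
    _ = Qᵀ * C * Q := by
      rw [weightedSecondMoment_mulVec hIntC, transpose_transpose, hC₀]
  have hCQ' : C * Q = Q * C' := by
    rw [hCQ, ← mul_assoc, ← mul_assoc, mul_eq_one_comm.mp hQ, one_mul]
  have heigQ : ∀ i, C *ᵥ (Q * U').col i = lam' i • (Q * U').col i := by
    intro i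
    have heig'col : C' *ᵥ U'.col i = lam' i • U'.col i := heig' i
    rw [col_mul, mulVec_mulVec, hCQ', ← mulVec_mulVec, heig'col, mulVec_smul]
  have hQU' : (Q * U')ᵀ * (Q * U') = 1 := by
    rw [transpose_mul, mul_assoc, ← mul_assoc Qᵀ, hQ, one_mul, hU']
  intro i
  obtain ⟨c, hc, hcol⟩ := exists_col_eq_smul_col_of_eigenbases hU hQU' hlam hlam' heig heigQ i
  refine ⟨c, hc, ?_⟩
  change (W * Q * U').col i = c • (W * U).col i
  rw [Matrix.mul_assoc, col_mul, hcol, mulVec_smul, col_mul]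

/-- If the eigenvalues of C = ∫ ∇g ∇gᵀ σ dγ are distinct (strictly
decreasing), then the matrix Z = W U defining the unique dimensionless groups is
independent of the choice of orthonormal basis W of null(D): replacing W by W' = W Q
(Q orthogonal), with the correspondingly transformed relation g'(γ') = g(Qγ'), density
σ'(γ') = σ(Qγ'), matrix C', and orthonormal eigenvector matrix U' (eigenvalues sorted
strictly decreasing), yields Z' = W' U' whose columns agree with those of Z = W U up
to scaling by nonzero constants. -/
theorem stmt15 (k m n : ℕ) (hkm : k < m) (hn : n = m - k)
    (D : Matrix (Fin k) (Fin m) ℝ) (hD : D.rank = k)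
    (W : Matrix (Fin m) (Fin n) ℝ) (hWorth : Wᵀ * W = 1)
    (hWnull : ∀ j : Fin n, D *ᵥ (fun i => W i j) = 0)
    (hWspan : Submodule.span ℝ (Set.range fun j : Fin n => (fun i => W i j : Fin m → ℝ))
      = LinearMap.ker D.mulVecLin)
    (Q : Matrix (Fin n) (Fin n) ℝ) (hQ : Qᵀ * Q = 1)
    (g : EuclideanSpace ℝ (Fin n) → ℝ) (hg : ContDiff ℝ 1 g)
    (Gg : EuclideanSpace ℝ (Fin n) → EuclideanSpace ℝ (Fin n))
    (hGg : ∀ γ, HasGradientAt g (Gg γ) γ)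
    (σ : EuclideanSpace ℝ (Fin n) → ℝ)
    (hσ0 : ∀ γ, 0 ≤ σ γ) (hσ1 : ∫ γ, σ γ = 1)
    (C : Matrix (Fin n) (Fin n) ℝ)
    (hC : ∀ i j, C i j = ∫ γ, Gg γ i * Gg γ j * σ γ)
    (hIntC : ∀ i j, Integrable (fun γ => Gg γ i * Gg γ j * σ γ))
    (U : Matrix (Fin n) (Fin n) ℝ) (hU : Uᵀ * U = 1)
    (lam : Fin n → ℝ) (hlam : StrictAnti lam)
    (heig : ∀ i : Fin n, C *ᵥ (fun j => U j i) = lam i • (fun j => U j i))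
    (g' : EuclideanSpace ℝ (Fin n) → ℝ)
    (hg' : ∀ γ' : EuclideanSpace ℝ (Fin n), g' γ' = g (WithLp.toLp 2 (Q *ᵥ γ' : Fin n → ℝ)))
    (Gg' : EuclideanSpace ℝ (Fin n) → EuclideanSpace ℝ (Fin n))
    (hGg' : ∀ γ', HasGradientAt g' (Gg' γ') γ')
    (C' : Matrix (Fin n) (Fin n) ℝ)
    (hC' : ∀ i j, C' i j = ∫ γ' : EuclideanSpace ℝ (Fin n),
      Gg' γ' i * Gg' γ' j * σ (WithLp.toLp 2 (Q *ᵥ γ' : Fin n → ℝ)))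
    (hIntC' : ∀ i j, Integrable (fun γ' : EuclideanSpace ℝ (Fin n) =>
      Gg' γ' i * Gg' γ' j * σ (WithLp.toLp 2 (Q *ᵥ γ' : Fin n → ℝ))))
    (U' : Matrix (Fin n) (Fin n) ℝ) (hU' : U'ᵀ * U' = 1)
    (lam' : Fin n → ℝ) (hlam' : StrictAnti lam')
    (heig' : ∀ i : Fin n, C' *ᵥ (fun j => U' j i) = lam' i • (fun j => U' j i)) :
    ∀ i : Fin n, ∃ c : ℝ, c ≠ 0 ∧
      (fun j => (W * Q * U') j i : Fin m → ℝ) = c • (fun j => (W * U) j i) :=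
  stmt15_general m n W Q hQ g Gg hGg σ C hC hIntC U hU lam hlam heig g' hg' Gg' hGg' C' hC' U' hU'
    lam' hlam' heig'
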